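/- Let J be a Grassmann necklace of type (k,n) with n ≥ 2 and 1 ≤ k ≤ n−1 such that the matroid M(J) with bases B(J) is connected. Then the affine span of the positroid polytope P_J := conv{e_B : B ∈ B(J)} ⊆ ℝ^n has dimension n−1. -/

import Mathlib

namespace PositroidPaper

variable {n : ℕ}

/-- The last element `n` of `[n] = {1,…,n}`, realized as the last element of `Fin n`. -/
def lastF (n : ℕ) [NeZero n] : Fin n :=
  ⟨n - 1, by have := Nat.pos_of_ne_zero (NeZero.ne n); omega⟩

/-- The Gale order `S ≤ᵢ T` with respect to the `i`-order on `Fin n`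
(the `i`-order is transported to the natural order on `Fin n` by `a ↦ a - i`). -/
def galeLE (i : Fin n) (S T : Finset (Fin n)) : Prop :=
  List.Forall₂ (· ≤ ·) ((S.image (fun a => a - i)).sort (· ≤ ·))
    ((T.image (fun a => a - i)).sort (· ≤ ·))

/-- A Grassmann necklace of type `(k,n)`. -/
def IsGrassmannNecklace (n k : ℕ) [NeZero n] (J : Fin n → Finset (Fin n)) : Prop :=
  (∀ i, (J i).card = k) ∧
    ∀ i : Fin n,
      (i ∈ J i → ∃ j : Fin n, J (i + 1) = insert j ((J i).erase i)) ∧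
      (i ∉ J i → J (i + 1) = J i)

/-- `B(J)`: the `k`-subsets `B` of `[n]` with `J_i ≤ᵢ B` for all `i`. -/
noncomputable def necklaceBases (n k : ℕ) (J : Fin n → Finset (Fin n)) :
    Finset (Finset (Fin n)) := by
  classical
  exact (Finset.powersetCard k (Finset.univ : Finset (Fin n))).filter
    (fun B => ∀ i, galeLE i (J i) B)

/-- The maximal minor of a `k × n` matrix on the column set `I` (taken in increasing order);
junk value `0` if `I` does not have exactly `k` elements. -/
noncomputable def colMinor {k n : ℕ} (A : Matrix (Fin k) (Fin n) ℝ) (I : Finset (Fin n)) : ℝ :=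
  if h : I.card = k then (A.submatrix id (fun j => ((I.orderIsoOfFin h) j : Fin n))).det else 0

/-- `Bs` is the set of bases of a rank-`k` positroid on `[n]`. -/
def IsPositroidBases (n k : ℕ) (Bs : Finset (Finset (Fin n))) : Prop :=
  ∃ A : Matrix (Fin k) (Fin n) ℝ, A.rank = k ∧
    (∀ I : Finset (Fin n), 0 ≤ colMinor A I) ∧
    ∀ I : Finset (Fin n), I ∈ Bs ↔ I.card = k ∧ colMinor A I ≠ 0

/-- The 0/1 indicator vector `e_B ∈ ℝ^n` of `B ⊆ [n]`. -/
def indic (B : Finset (Fin n)) : Fin n → ℝ := fun a => if a ∈ B then 1 else 0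

/-- The positroid polytope `P_J = conv{e_B : B ∈ B(J)}`. -/
def PJ (n k : ℕ) (J : Fin n → Finset (Fin n)) : Set (Fin n → ℝ) :=
  convexHull ℝ {x | ∃ B ∈ necklaceBases n k J, x = indic B}

/-- The `j`-th element (0-indexed) of `S` in the `i`-order. -/
noncomputable def nthGale [NeZero n] (i : Fin n) (S : Finset (Fin n)) (j : ℕ) : Fin n :=
  ((S.image (fun a => a - i)).sort (· ≤ ·)).getD j 0 + i

/-- The (closed) cyclic interval `[i,j] ⊆ [n]`. -/
def cycInterval (i j : Fin n) : Finset (Fin n) :=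
  Finset.univ.filter (fun a => a - i ≤ j - i)

/-- `x_{[i,j]} = x_i + x_{i+1} + ⋯ + x_{j-1}` (cyclically; the empty sum if `i = j`). -/
def cycSum (x : Fin n → ℝ) (i j : Fin n) : ℝ :=
  ∑ a ∈ Finset.univ.filter (fun a : Fin n => a - i < j - i), x a

/-- The set of cyclic left descents of the word `w|_S`, where `S ⊆ [n]` is totally ordered
by the `i`-order: an element `a ∈ S` belongs to this set iff either `a` has a successor `b`
in `S` (w.r.t. the `i`-order) occurring to its left in `w`, or `a` is the maximum of `S`,
`S` has at least two elements, and the minimum of `S` occurs to the left of `a` in `w`. -/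
noncomputable def cDesL (w : Equiv.Perm (Fin n)) (i : Fin n) (S : Finset (Fin n)) :
    Finset (Fin n) := by
  classical
  exact S.filter (fun a =>
    (∃ b ∈ S, a - i < b - i ∧ (∀ c ∈ S, a - i < c - i → b - i ≤ c - i) ∧ w⁻¹ b < w⁻¹ a) ∨
    ((∀ b ∈ S, b - i ≤ a - i) ∧ ∃ m ∈ S, m ≠ a ∧ (∀ b ∈ S, m - i ≤ b - i) ∧ w⁻¹ m < w⁻¹ a))

/-- `cdes_L(w|_S)` where `S` is ordered by the `i`-order. -/
noncomputable def cdesL (w : Equiv.Perm (Fin n)) (i : Fin n) (S : Finset (Fin n)) : ℕ :=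
  (cDesL w i S).card

/-- The cyclic rotation `w^{(r)}` of the word `w_1 ⋯ w_n` ending at the letter `r`. -/
def rotTo [NeZero n] (w : Equiv.Perm (Fin n)) (r : Fin n) : Equiv.Perm (Fin n) :=
  (Equiv.addRight (w⁻¹ r + 1)).trans w

/-- `I_r(w) = cDes_L(w^{(r)})`. -/
noncomputable def IrFinset [NeZero n] (w : Equiv.Perm (Fin n)) (r : Fin n) : Finset (Fin n) :=
  cDesL (rotTo w r) 0 Finset.univ

/-- The vertex set `{e_{I_r(w)} : r ∈ [n]}` of the `(w)`-simplex. -/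
def vertexSet [NeZero n] (w : Equiv.Perm (Fin n)) : Set (Fin n → ℝ) :=
  {x | ∃ r : Fin n, x = indic (IrFinset w r)}

/-- The `(w)`-simplex `Δ_(w) = conv{e_{I_1(w)},…,e_{I_n(w)}}`. -/
def simplexW [NeZero n] (w : Equiv.Perm (Fin n)) : Set (Fin n → ℝ) :=
  convexHull ℝ (vertexSet w)

/-- The set `D_J` of permutations labelling the circuit triangulation of `P_J`. -/
noncomputable def DJ (n k : ℕ) [NeZero n] (J : Fin n → Finset (Fin n)) :
    Finset (Equiv.Perm (Fin n)) := by
  classical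
  exact Finset.univ.filter (fun w =>
    w (lastF n) = lastF n ∧ cdesL w 0 Finset.univ = k ∧
      ∀ r j : Fin n, galeLE j (J j) (IrFinset w r))

/-- Connectedness of a matroid on `[n]` given by its set of bases: the ground set admits no
partition into nonempty `A`, `Aᶜ` such that every basis is a union of a basis of the
restriction to `A` and one of the restriction to `Aᶜ`, all such unions being bases. -/
def ConnectedBases (Bs : Finset (Finset (Fin n))) : Prop :=
  ¬ ∃ A : Finset (Fin n), A.Nonempty ∧ Aᶜ.Nonempty ∧
      ∀ B₁ ∈ Bs, ∀ B₂ ∈ Bs, (B₁ ∩ A) ∪ (B₂ \ A) ∈ Bs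

/-- `Δ_(u)` and `Δ_(w)` share a common facet. -/
def SharedFacet [NeZero n] (u w : Equiv.Perm (Fin n)) : Prop :=
  (vertexSet u ∩ vertexSet w).ncard = n - 1 ∧
    simplexW u ∩ simplexW w = convexHull ℝ (vertexSet u ∩ vertexSet w)

/-- The graph `Γ_J` of the circuit triangulation of `P_J`. -/
def gammaJ (n k : ℕ) [NeZero n] (J : Fin n → Finset (Fin n)) :
    SimpleGraph (Equiv.Perm (Fin n)) where
  Adj u w := u ≠ w ∧ u ∈ DJ n k J ∧ w ∈ DJ n k J ∧ SharedFacet u w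
  symm := by
    constructor
    rintro u w ⟨hne, hu, hw, hc, hi⟩
    refine ⟨hne.symm, hw, hu, ?_, ?_⟩
    · rwa [Set.inter_comm]
    · rw [Set.inter_comm (simplexW w) (simplexW u), Set.inter_comm (vertexSet w) (vertexSet u)]
      exact hi
  loopless := ⟨fun u h => h.1 rfl⟩

/-- Graph distance in `Γ_J`. -/
noncomputable def distJ (n k : ℕ) [NeZero n] (J : Fin n → Finset (Fin n))
    (u w : Equiv.Perm (Fin n)) : ℕ :=
  (gammaJ n k J).dist u w

/-- The partial order `≺` on `D_J` determined by `w₀`. -/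
def precJ (n k : ℕ) [NeZero n] (J : Fin n → Finset (Fin n))
    (w0 u v : Equiv.Perm (Fin n)) : Prop :=
  u ≠ v ∧ distJ n k J w0 u + distJ n k J u v = distJ n k J w0 v

/-- `cover(w)`: the number of elements of `D_J` covered by `w` in `(D_J, ≺)`. -/
noncomputable def coverNum (n k : ℕ) [NeZero n] (J : Fin n → Finset (Fin n))
    (w0 w : Equiv.Perm (Fin n)) : ℕ :=
  {u : Equiv.Perm (Fin n) | u ∈ DJ n k J ∧ precJ n k J w0 u w ∧
    ¬ ∃ v ∈ DJ n k J, precJ n k J w0 u v ∧ precJ n k J w0 v w}.ncard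

/-- The facet of `Δ_(w)` obtained by deleting the vertex `e_{I_r(w)}`. -/
def facetW [NeZero n] (w : Equiv.Perm (Fin n)) (r : Fin n) : Set (Fin n → ℝ) :=
  convexHull ℝ {x | ∃ r' : Fin n, r' ≠ r ∧ x = indic (IrFinset w r')}

/-- The Ehrhart counting function `L(X,t) = #(t·X ∩ ℤ^m)`. -/
noncomputable def Lcount {m : ℕ} (X : Set (Fin m → ℝ)) (t : ℕ) : ℕ :=
  ((fun x : Fin m → ℝ => (t : ℝ) • x) '' X ∩ {x | ∀ a, ∃ z : ℤ, x a = (z : ℝ)}).ncard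

/-- Projection `ℝ^n → ℝ^{n-1}` onto the first `n-1` coordinates. -/
def proj (n : ℕ) (x : Fin n → ℝ) : Fin (n - 1) → ℝ :=
  fun a => x (Fin.castLE (Nat.sub_le n 1) a)

/-- `F` is an upper facet of `Q ⊆ ℝ^m`. -/
def IsUpperFacet {m : ℕ} (Q F : Set (Fin m → ℝ)) : Prop :=
  ∃ a b : Fin m, a ≤ b ∧ ∃ c : ℤ,
    F = Q ∩ {x | ∑ t ∈ Finset.Icc a b, x t = (c : ℝ)} ∧
    Q ⊆ {x | ∑ t ∈ Finset.Icc a b, x t ≤ (c : ℝ)} ∧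
    Module.finrank ℝ (affineSpan ℝ F).direction = m - 1

/-- The half-open polytope: `Q` with all its upper facets removed. -/
def halfOpen {m : ℕ} (Q : Set (Fin m → ℝ)) : Set (Fin m → ℝ) :=
  Q \ ⋃₀ {F | IsUpperFacet Q F}

/-- The half-open simplex `∇°_w`. -/
def nablaO [NeZero n] (w : Equiv.Perm (Fin n)) : Set (Fin n → ℝ) :=
  {y | 0 < y (w 0) ∧ y (w (lastF n)) ≤ 1 ∧
    ∀ p : Fin n, p ≠ lastF n →
      (w p < w (p + 1) → y (w p) ≤ y (w (p + 1))) ∧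
      (w (p + 1) < w p → y (w p) < y (w (p + 1)))}

/-- `des(w) = #{i ∈ [n-1] : w_i > w_{i+1}}`. -/
noncomputable def desNum [NeZero n] (w : Equiv.Perm (Fin n)) : ℕ := by
  classical
  exact (Finset.univ.filter (fun p : Fin n => p ≠ lastF n ∧ w (p + 1) < w p)).card

/-- `F` is a facet of the polytope `P ⊆ ℝ^n`. -/
def IsFacetOf {n : ℕ} (P F : Set (Fin n → ℝ)) : Prop :=
  ∃ (u : Fin n → ℝ) (c : ℝ),
    F = P ∩ {x | ∑ a, u a * x a = c} ∧ P ⊆ {x | ∑ a, u a * x a ≤ c} ∧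
    Module.finrank ℝ (affineSpan ℝ F).direction + 1 =
      Module.finrank ℝ (affineSpan ℝ P).direction

/-!
Rewriting the Gale conditions, `B(J)` consists of the `k`-sets `B` with
`#(B ∩ [i, j]) ≤ #(J_i ∩ [i, j])` for every cyclic interval `[i, j]`, and walking along the
necklace shows that these bounds are submodular on overlapping intervals. If `B - x + y` is never
in `B(J)` for `y ∈ B' \ B`, then each such `y` lies on a tight interval avoiding `x`; the maximal
ones are disjoint, and counting on their union contradicts `#B = #B'`. So `B(J)` satisfies basis
exchange, hence is the set of bases of a matroid, and the dual exchange comes from the dual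
matroid. Using both exchanges, every union `A` of classes of the relation "`e` can be exchanged
for `f` in some basis" has `(B₁ ∩ A) ∪ (B₂ \ A) ∈ B(J)`, so connectedness makes that relation
total. Then every `e_u - e_v` lies in the span of differences of vertices of `P_J`, and `P_J`
spans the hyperplane `∑ x_a = k`.
-/

open Finset
open scoped Fin.NatCast Fin.CommRing

section Counting

variable {α : Type*} [DecidableEq α]

theorem card_inter_biUnion_le {ι : Type*} {s : Finset ι} {t : ι → Finset α} {B B' : Finset α}
    (hs : (s : Set ι).PairwiseDisjoint t) (h : ∀ i ∈ s, #(B' ∩ t i) ≤ #(B ∩ t i)) :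
    #(B' ∩ s.biUnion t) ≤ #(B ∩ s.biUnion t) := by
  rw [inter_biUnion, inter_biUnion, card_biUnion (hs.mono fun _ => inter_subset_right),
    card_biUnion (hs.mono fun _ => inter_subset_right)]
  exact sum_le_sum h

theorem card_inter_lt_card_inter_of_sdiff_subset {B B' T : Finset α} {x : α} (hcard : #B = #B')
    (hx : x ∈ B \ B') (hxT : x ∉ T) (hT : B' \ B ⊆ T) : #(B ∩ T) < #(B' ∩ T) := by
  have hsub : B' \ T ⊆ (B \ T).erase x := fun a ha => by
    simp only [mem_sdiff, mem_erase] at ha hx ⊢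
    exact ⟨fun h => hx.2 (h ▸ ha.1), by_contra fun haB => ha.2 (hT (mem_sdiff.2 ⟨ha.1, haB⟩)),
      ha.2⟩
  have hlt := (card_le_card hsub).trans_lt
    (card_erase_lt_of_mem (mem_sdiff.2 ⟨(mem_sdiff.1 hx).1, hxT⟩))
  have := card_inter_add_card_sdiff B T
  have := card_inter_add_card_sdiff B' T
  omega

theorem card_insert_erase_inter_le_succ (B S : Finset α) (x y : α) :
    #(insert y (B.erase x) ∩ S) ≤ #(B ∩ S) + 1 :=
  (card_le_card fun a => by simp only [mem_inter, mem_insert, mem_erase]; tauto).trans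
    (card_insert_le y (B ∩ S))

theorem card_insert_erase_inter_le {B S : Finset α} {x y : α} (hx : x ∈ B) (h : y ∈ S → x ∈ S) :
    #(insert y (B.erase x) ∩ S) ≤ #(B ∩ S) := by
  by_cases hy : y ∈ S
  · have hxBS : x ∈ B ∩ S := mem_inter.2 ⟨hx, h hy⟩
    calc #(insert y (B.erase x) ∩ S) ≤ #(insert y ((B ∩ S).erase x)) :=
          card_le_card fun a => by simp only [mem_inter, mem_insert, mem_erase]; tauto
      _ ≤ #((B ∩ S).erase x) + 1 := card_insert_le _ _
      _ = #(B ∩ S) := by rw [card_erase_of_mem hxBS, Nat.sub_add_cancel (card_pos.2 ⟨x, hxBS⟩)]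
  · exact card_le_card fun a => by
      simp only [mem_inter, mem_insert, mem_erase]
      rintro ⟨rfl | ⟨-, ha⟩, haS⟩
      · exact absurd haS hy
      · exact ⟨ha, haS⟩

end Counting

section Exchange

variable {α : Type*} [DecidableEq α] {Bs : Finset (Finset α)}

def HasBasisExchange (Bs : Finset (Finset α)) : Prop :=
  ∀ B₁ ∈ Bs, ∀ B₂ ∈ Bs, ∀ e ∈ B₁ \ B₂, ∃ f ∈ B₂ \ B₁, insert f (B₁.erase e) ∈ Bs

def Exchangeable (Bs : Finset (Finset α)) (e f : α) : Prop :=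
  ∃ B ∈ Bs, e ∈ B ∧ f ∉ B ∧ insert f (B.erase e) ∈ Bs

noncomputable def HasBasisExchange.toMatroid (hBs : HasBasisExchange Bs) {B : Finset α}
    (hB : B ∈ Bs) : Matroid α :=
  Matroid.ofExistsFiniteIsBase Set.univ (fun X => ∃ B ∈ Bs, ↑B = X)
    ⟨B, ⟨B, hB, rfl⟩, B.finite_toSet⟩
    (by
      rintro _ _ ⟨B₁, hB₁, rfl⟩ ⟨B₂, hB₂, rfl⟩ e he
      obtain ⟨f, hf, hmem⟩ := hBs B₁ hB₁ B₂ hB₂ e (by simpa using he)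
      exact ⟨f, by simpa using hf, _, hmem, by simp⟩)
    (fun _ _ => Set.subset_univ _)

/-- The dual exchange property, read off from the exchange axiom of the dual matroid. -/
theorem HasBasisExchange.exists_insert_erase_mem (hBs : HasBasisExchange Bs) {B₁ B₂ : Finset α}
    (hB₁ : B₁ ∈ Bs) (hB₂ : B₂ ∈ Bs) {e : α} (he : e ∈ B₂ \ B₁) :
    ∃ f ∈ B₁ \ B₂, insert e (B₁.erase f) ∈ Bs := by
  set M := hBs.toMatroid hB₁
  have hE : M.E = Set.univ := rfl
  have hM₁ : M✶.IsBase (Set.univ \ ↑B₁) :=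
    hE ▸ Matroid.IsBase.compl_isBase_dual ⟨B₁, hB₁, rfl⟩
  have hM₂ : M✶.IsBase (Set.univ \ ↑B₂) :=
    hE ▸ Matroid.IsBase.compl_isBase_dual ⟨B₂, hB₂, rfl⟩
  obtain ⟨f, hf, hbase⟩ := hM₁.exchange hM₂ (e := e) (by simpa [and_comm] using he)
  obtain ⟨B, hB, hBeq⟩ := hbase.compl_isBase_of_dual
  simp only [Set.mem_sdiff, Set.mem_univ, true_and, not_not, mem_coe] at hf
  refine ⟨f, mem_sdiff.2 hf.symm, ?_⟩
  convert hB using 1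
  apply coe_injective
  rw [hBeq, hE]
  ext a
  have : e ∉ B₁ := (mem_sdiff.1 he).2
  simp only [coe_insert, coe_erase, Set.mem_insert_iff, Set.mem_sdiff, Set.mem_singleton_iff,
    mem_coe, Set.mem_univ, true_and]
  grind

theorem HasBasisExchange.inter_union_sdiff_mem (hBs : HasBasisExchange Bs) {A : Finset α}
    (hA : ∀ e f, Exchangeable Bs e f → (e ∈ A ↔ f ∈ A)) {B₁ B₂ : Finset α}
    (hB₁ : B₁ ∈ Bs) (hB₂ : B₂ ∈ Bs) : B₁ ∩ A ∪ B₂ \ A ∈ Bs := by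
  -- Dual exchanges move `B₁ ∩ A` into `B₂` one element at a time; what leaves `B₂` stays in `A`.
  induction h : #((B₁ ∩ A) \ B₂) generalizing B₂ with
  | zero =>
    have hsub : B₁ ∩ A ⊆ B₂ := by simpa [sdiff_eq_empty_iff_subset] using h
    have hsub' : B₂ ∩ A ⊆ B₁ := by
      intro a ha
      obtain ⟨haB₂, haA⟩ := mem_inter.1 ha
      by_contra haB₁
      obtain ⟨f, hf, hmem⟩ := hBs B₂ hB₂ B₁ hB₁ a (mem_sdiff.2 ⟨haB₂, haB₁⟩)
      obtain ⟨hfB₁, hfB₂⟩ := mem_sdiff.1 hf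
      have hfA : f ∈ A := (hA a f ⟨B₂, hB₂, haB₂, hfB₂, hmem⟩).1 haA
      exact hfB₂ (hsub (mem_inter.2 ⟨hfB₁, hfA⟩))
    convert hB₂ using 1
    ext a
    have h₁ := @hsub a
    have h₂ := @hsub' a
    simp only [mem_union, mem_inter, mem_sdiff] at h₁ h₂ ⊢
    tauto
  | succ d ih =>
    obtain ⟨z, hz⟩ : ((B₁ ∩ A) \ B₂).Nonempty := card_pos.1 (by omega)
    obtain ⟨⟨hzB₁, hzA⟩, hzB₂⟩ : (z ∈ B₁ ∧ z ∈ A) ∧ z ∉ B₂ := by simpa using hz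
    obtain ⟨w, hw, hmem⟩ := hBs.exists_insert_erase_mem hB₂ hB₁ (mem_sdiff.2 ⟨hzB₁, hzB₂⟩)
    obtain ⟨hwB₂, hwB₁⟩ := mem_sdiff.1 hw
    have hwA : w ∈ A := (hA w z ⟨B₂, hB₂, hwB₂, hzB₂, hmem⟩).2 hzA
    have hdiff : (B₁ ∩ A) \ insert z (B₂.erase w) = ((B₁ ∩ A) \ B₂).erase z := by
      ext a
      simp only [mem_sdiff, mem_inter, mem_insert, mem_erase]
      grind
    convert ih hmem (by rw [hdiff, card_erase_of_mem hz, h, Nat.add_sub_cancel]) using 2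
    ext a
    simp only [mem_sdiff, mem_insert, mem_erase]
    grind

theorem ConnectedBases.eqvGen_exchangeable {n : ℕ} {Bs : Finset (Finset (Fin n))}
    (hconn : ConnectedBases Bs) (hBs : HasBasisExchange Bs) (u v : Fin n) :
    Relation.EqvGen (Exchangeable Bs) u v := by
  classical
  by_contra huv
  refine hconn ⟨univ.filter (Relation.EqvGen (Exchangeable Bs) u), ⟨u, by simpa using .refl u⟩,
    ⟨v, by simpa using huv⟩, fun B₁ hB₁ B₂ hB₂ => hBs.inter_union_sdiff_mem ?_ hB₁ hB₂⟩
  intro e f hef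
  simp only [mem_filter, mem_univ, true_and]
  exact ⟨fun h => h.trans _ _ _ (.rel _ _ hef), fun h => h.trans _ _ _ (.symm _ _ (.rel _ _ hef))⟩

end Exchange

section CoordSum

variable {n : ℕ}

def coordSum (n : ℕ) : (Fin n → ℝ) →ₗ[ℝ] ℝ := ∑ a, LinearMap.proj a

theorem coordSum_apply (x : Fin n → ℝ) : coordSum n x = ∑ a, x a := by
  simp [coordSum]

theorem coordSum_indic (B : Finset (Fin n)) : coordSum n (indic B) = #B := by
  simp [coordSum_apply, indic]

theorem finrank_ker_coordSum [NeZero n] :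
    Module.finrank ℝ (LinearMap.ker (coordSum n)) = n - 1 := by
  have hsurj : Function.Surjective (coordSum n) := fun c =>
    ⟨Pi.single 0 c, by simp [coordSum_apply]⟩
  have := LinearMap.finrank_range_add_finrank_ker (coordSum n)
  rw [LinearMap.range_eq_top.2 hsurj, finrank_top, Module.finrank_self,
    Module.finrank_fin_fun] at this
  omega

theorem indic_sub_indic_insert_erase {B : Finset (Fin n)} {u v : Fin n} (hu : u ∈ B)
    (hv : v ∉ B) : indic B - indic (insert v (B.erase u)) = Pi.single u 1 - Pi.single v 1 := by
  ext a
  simp only [indic, Pi.sub_apply, Pi.single_apply, mem_insert, mem_erase]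
  by_cases hau : a = u <;> by_cases hav : a = v <;> simp_all

theorem mem_ker_coordSum_eq_sum [NeZero n] {z : Fin n → ℝ}
    (hz : z ∈ LinearMap.ker (coordSum n)) : z = ∑ a, z a • (Pi.single a 1 - Pi.single 0 1) := by
  rw [LinearMap.mem_ker, coordSum_apply] at hz
  simp only [smul_sub, sum_sub_distrib, ← sum_smul, hz, zero_smul, sub_zero]
  ext b
  simp [Finset.sum_apply, Pi.single_apply]

theorem single_sub_single_mem_vectorSpan {Bs : Finset (Finset (Fin n))} {u v : Fin n}
    (huv : Relation.EqvGen (Exchangeable Bs) u v) :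
    Pi.single u 1 - Pi.single v 1 ∈ vectorSpan ℝ {x | ∃ B ∈ Bs, x = indic B} := by
  induction huv with
  | rel a b hab =>
    obtain ⟨B, hB, haB, hbB, hmem⟩ := hab
    rw [← indic_sub_indic_insert_erase haB hbB]
    exact vsub_mem_vectorSpan ℝ ⟨B, hB, rfl⟩ ⟨_, hmem, rfl⟩
  | refl a => simp
  | symm a b _ ih => simpa using neg_mem ih
  | trans a b c _ _ ih₁ ih₂ => simpa using add_mem ih₁ ih₂

theorem vectorSpan_indic_le_ker {Bs : Finset (Finset (Fin n))} {k : ℕ}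
    (hcard : ∀ B ∈ Bs, #B = k) :
    vectorSpan ℝ {x | ∃ B ∈ Bs, x = indic B} ≤ LinearMap.ker (coordSum n) := by
  rw [vectorSpan_def, Submodule.span_le]
  rintro _ ⟨_, ⟨B, hB, rfl⟩, _, ⟨C, hC, rfl⟩, rfl⟩
  simp [coordSum_indic, hcard B hB, hcard C hC]

theorem ker_le_vectorSpan_indic [NeZero n] {Bs : Finset (Finset (Fin n))}
    (hBs : ∀ u v, Relation.EqvGen (Exchangeable Bs) u v) :
    LinearMap.ker (coordSum n) ≤ vectorSpan ℝ {x | ∃ B ∈ Bs, x = indic B} := fun z hz => by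
  rw [mem_ker_coordSum_eq_sum hz]
  exact sum_mem fun a _ => Submodule.smul_mem _ _ (single_sub_single_mem_vectorSpan (hBs a 0))

theorem vectorSpan_indic_eq_ker [NeZero n] {Bs : Finset (Finset (Fin n))} {k : ℕ}
    (hcard : ∀ B ∈ Bs, #B = k) (hBs : ∀ u v, Relation.EqvGen (Exchangeable Bs) u v) :
    vectorSpan ℝ {x | ∃ B ∈ Bs, x = indic B} = LinearMap.ker (coordSum n) :=
  (vectorSpan_indic_le_ker hcard).antisymm (ker_le_vectorSpan_indic hBs)

end CoordSum

section GaleOrder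

variable {α : Type*} [LinearOrder α]

theorem countP_le_countP_of_forall₂ {l₁ l₂ : List α} (h : List.Forall₂ (· ≤ ·) l₁ l₂) (t : α) :
    l₂.countP (· ≤ t) ≤ l₁.countP (· ≤ t) := by
  induction h with
  | nil => simp
  | @cons a b _ _ hab _ ih =>
    simp only [List.countP_cons, decide_eq_true_eq]
    split_ifs with hb ha
    · omega
    · exact absurd (hab.trans hb) ha
    all_goals omega

theorem forall₂_of_countP_le_countP {l₁ l₂ : List α} (h₁ : l₁.Pairwise (· ≤ ·))
    (h₂ : l₂.Pairwise (· ≤ ·)) (hlen : l₁.length = l₂.length)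
    (hcount : ∀ t, l₂.countP (· ≤ t) ≤ l₁.countP (· ≤ t)) : List.Forall₂ (· ≤ ·) l₁ l₂ := by
  induction l₁ generalizing l₂ with
  | nil => cases l₂ with
    | nil => exact .nil
    | cons => simp at hlen
  | cons a l₁ ih =>
    cases l₂ with
    | nil => simp at hlen
    | cons b l₂ =>
      rw [List.pairwise_cons] at h₁ h₂
      -- some element of `a :: l₁` is `≤ b`, and `a` is the least of them
      have hab : a ≤ b := by
        obtain ⟨c, hc, hcb⟩ := List.countP_pos_iff.1 <| (hcount b).trans_lt' (by simp)
        rcases List.mem_cons.1 hc with rfl | hc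
        · simpa using hcb
        · exact (h₁.1 c hc).trans (by simpa using hcb)
      refine .cons hab (ih h₁.2 h₂.2 (by simpa using hlen) fun t => ?_)
      by_cases hbt : b ≤ t
      · have := hcount t
        simp only [List.countP_cons, decide_eq_true_eq, if_pos hbt, if_pos (hab.trans hbt)]
          at this
        omega
      · have : l₂.countP (· ≤ t) = 0 :=
          List.countP_eq_zero.2 fun c hc hct => hbt ((h₂.1 c hc).trans (by simpa using hct))
        omega

theorem countP_sort (s : Finset α) (p : α → Prop) [DecidablePred p] :
    (s.sort (· ≤ ·)).countP p = #(s.filter p) := by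
  rw [← (s.sort_nodup (· ≤ ·)).card_eq_countP, sort_toFinset]

theorem forall₂_sort_le_iff {s t : Finset α} (h : #s = #t) :
    List.Forall₂ (· ≤ ·) (s.sort (· ≤ ·)) (t.sort (· ≤ ·)) ↔
      ∀ a, #(t.filter (· ≤ a)) ≤ #(s.filter (· ≤ a)) := by
  refine ⟨fun h₂ a => ?_, fun hcount => forall₂_of_countP_le_countP (s.pairwise_sort _)
    (t.pairwise_sort _) (by simp [h]) fun a => ?_⟩
  · simpa [countP_sort] using countP_le_countP_of_forall₂ h₂ a
  · simpa [countP_sort] using hcount a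

end GaleOrder

section Necklace

variable {n k : ℕ} [NeZero n] {J : Fin n → Finset (Fin n)}

omit [NeZero n] in
theorem mem_cycInterval {i j a : Fin n} : a ∈ cycInterval i j ↔ a - i ≤ j - i := by
  simp [cycInterval]

theorem galeLE_iff (i : Fin n) {S T : Finset (Fin n)} (h : #S = #T) :
    galeLE i S T ↔ ∀ j, #(T ∩ cycInterval i j) ≤ #(S ∩ cycInterval i j) := by
  have hcard (U : Finset (Fin n)) (j : Fin n) :
      #((U.image (· - i)).filter (· ≤ j - i)) = #(U ∩ cycInterval i j) := by
    rw [filter_image, card_image_of_injective _ sub_left_injective]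
    congr 1
    ext a
    simp [mem_cycInterval]
  rw [galeLE, forall₂_sort_le_iff (by rw [card_image_of_injective _ sub_left_injective,
    card_image_of_injective _ sub_left_injective, h])]
  refine ⟨fun H j => by simpa only [hcard] using H (j - i), fun H a => ?_⟩
  have := H (a + i)
  rwa [← hcard, ← hcard, add_sub_cancel_right] at this

omit [NeZero n] in
theorem card_of_mem_necklaceBases {B : Finset (Fin n)} (hB : B ∈ necklaceBases n k J) :
    #B = k := by
  classical
  exact (mem_powersetCard.1 (mem_filter.1 hB).1).2

theorem mem_necklaceBases_iff (hJ : ∀ i, #(J i) = k) {B : Finset (Fin n)} :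
    B ∈ necklaceBases n k J ↔
      #B = k ∧ ∀ i j, #(B ∩ cycInterval i j) ≤ #(J i ∩ cycInterval i j) := by
  simp only [necklaceBases, mem_filter, mem_powersetCard, subset_univ, true_and]
  exact and_congr_right fun hB => forall_congr' fun i => galeLE_iff i ((hJ i).trans hB.symm)

theorem IsGrassmannNecklace.erase_subset (hJ : IsGrassmannNecklace n k J) (i : Fin n) :
    (J i).erase i ⊆ J (i + 1) := by
  by_cases hi : i ∈ J i
  · obtain ⟨j, hj⟩ := (hJ.2 i).1 hi
    exact hj ▸ subset_insert _ _
  · exact (hJ.2 i).2 hi ▸ Finset.erase_subset _ _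

/-- Walking along the necklace only loses elements at the positions it passes. -/
theorem IsGrassmannNecklace.card_inter_le_card_inter_add (hJ : IsGrassmannNecklace n k J)
    {I : Finset (Fin n)} (i : Fin n) (d : ℕ) (hI : ∀ e < d, i + e ∉ I) :
    #(J i ∩ I) ≤ #(J (i + d) ∩ I) := by
  induction d with
  | zero => simp
  | succ d ih =>
    refine (ih fun e he => hI e (by omega)).trans (card_le_card fun a ha => ?_)
    obtain ⟨haJ, haI⟩ := mem_inter.1 ha
    have had : a ≠ i + d := by rintro rfl; exact hI d (by omega) haI
    rw [Nat.cast_succ, ← add_assoc]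
    exact mem_inter.2 ⟨hJ.erase_subset _ (mem_erase.2 ⟨had, haJ⟩), haI⟩

end Necklace

section Arcs

variable {n k : ℕ} [NeZero n] {J : Fin n → Finset (Fin n)}

/-- The position of `a` when `[n]` is read cyclically starting just after `x`, so that `x` comes
last. -/
def pos (x a : Fin n) : ℕ := (a - (x + 1) : Fin n)

def atPos (x : Fin n) (p : ℕ) : Fin n := x + 1 + (p : Fin n)

def arc (x : Fin n) (p q : ℕ) : Finset (Fin n) :=
  univ.filter fun a => p ≤ pos x a ∧ pos x a ≤ q

def arcBound (J : Fin n → Finset (Fin n)) (x : Fin n) (p q : ℕ) : ℕ :=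
  #(J (atPos x p) ∩ arc x p q)

theorem pos_lt (x a : Fin n) : pos x a < n := Fin.isLt _

theorem atPos_pos (x a : Fin n) : atPos x (pos x a) = a := by
  rw [atPos, pos, Fin.cast_val_eq_self]
  ring

theorem pos_atPos (x : Fin n) {p : ℕ} (hp : p < n) : pos x (atPos x p) = p := by
  rw [atPos, pos, add_sub_cancel_left, Fin.val_cast_of_lt hp]

theorem pos_self (x : Fin n) : pos x x = n - 1 := by
  obtain ⟨m, rfl⟩ := Nat.exists_eq_succ_of_ne_zero (NeZero.ne n)
  have h : x - (x + 1) = -1 := by ring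
  rw [pos, h, Fin.coe_neg_one, Nat.succ_sub_one]

theorem atPos_add (x : Fin n) (p e : ℕ) : atPos x p + e = atPos x (p + e) := by
  rw [atPos, atPos, Nat.cast_add]
  ring

theorem val_sub_eq_pos (x a i : Fin n) : ((a - i : Fin n) : ℕ) =
    if pos x i ≤ pos x a then pos x a - pos x i else n + pos x a - pos x i := by
  have h : a - i = (a - (x + 1)) - (i - (x + 1)) := (sub_sub_sub_cancel_right _ _ _).symm
  rw [h]
  split_ifs with hle
  · exact Fin.sub_val_of_le hle
  · exact Fin.coe_sub_iff_lt.2 (not_le.1 hle)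

theorem mem_arc {x a : Fin n} {p q : ℕ} : a ∈ arc x p q ↔ p ≤ pos x a ∧ pos x a ≤ q := by
  simp [arc]

theorem arc_eq_cycInterval (x : Fin n) {p q : ℕ} (hpq : p ≤ q) (hq : q < n) :
    arc x p q = cycInterval (atPos x p) (atPos x q) := by
  ext a
  rw [mem_arc, mem_cycInterval, Fin.le_def, val_sub_eq_pos x, val_sub_eq_pos x,
    pos_atPos x (hpq.trans_lt hq), pos_atPos x hq]
  have := pos_lt x a
  split_ifs <;> omega

theorem cycInterval_eq_arc {x i j : Fin n} (hx : x ∉ cycInterval i j) :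
    pos x i ≤ pos x j ∧ pos x j < n - 1 ∧ cycInterval i j = arc x (pos x i) (pos x j) := by
  rw [mem_cycInterval, Fin.le_def, val_sub_eq_pos x, val_sub_eq_pos x, pos_self] at hx
  have hi := pos_lt x i
  have hj := pos_lt x j
  have hij : pos x i ≤ pos x j := by
    by_contra
    split_ifs at hx <;> omega
  refine ⟨hij, by split_ifs at hx <;> omega, ?_⟩
  ext a
  rw [mem_arc, mem_cycInterval, Fin.le_def, val_sub_eq_pos x, val_sub_eq_pos x]
  have := pos_lt x a
  split_ifs <;> omega

theorem card_inter_arc_split (x : Fin n) (S : Finset (Fin n)) {p q q' : ℕ} (h₁ : p ≤ q + 1)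
    (h₂ : q ≤ q') : #(S ∩ arc x p q') = #(S ∩ arc x p q) + #(S ∩ arc x (q + 1) q') := by
  rw [← card_union_of_disjoint (disjoint_left.2 fun a ha hb => by
    simp only [mem_inter, mem_arc] at ha hb; omega), ← inter_union_distrib_left]
  congr 2
  ext a
  simp only [mem_union, mem_arc]
  omega

theorem card_inter_arc_le_arcBound (hJ : IsGrassmannNecklace n k J) {B : Finset (Fin n)}
    (hB : B ∈ necklaceBases n k J) (x : Fin n) {p q : ℕ} (hpq : p ≤ q) (hq : q < n) :
    #(B ∩ arc x p q) ≤ arcBound J x p q := by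
  rw [arcBound, arc_eq_cycInterval x hpq hq]
  exact ((mem_necklaceBases_iff hJ.1).1 hB).2 _ _

theorem arcBound_submodular (hJ : IsGrassmannNecklace n k J) (x : Fin n) {p p' q q' : ℕ}
    (hpp' : p ≤ p') (hp'q : p' ≤ q) (hqq' : q ≤ q') (hq' : q' < n) :
    arcBound J x p q' + arcBound J x p' q ≤ arcBound J x p q + arcBound J x p' q' := by
  have hwalk : #(J (atPos x p) ∩ arc x (q + 1) q') ≤ #(J (atPos x p') ∩ arc x (q + 1) q') := by
    have := hJ.card_inter_le_card_inter_add (I := arc x (q + 1) q') (atPos x p) (p' - p)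
      fun e he => by rw [atPos_add, mem_arc, pos_atPos x (by omega)]; omega
    rwa [atPos_add, Nat.add_sub_cancel' hpp'] at this
  have := card_inter_arc_split x (J (atPos x p)) (p := p) (by omega) hqq'
  have := card_inter_arc_split x (J (atPos x p')) (p := p') (by omega) hqq'
  unfold arcBound
  omega

def IsTight (J : Fin n → Finset (Fin n)) (B : Finset (Fin n)) (x : Fin n) (p q : ℕ) : Prop :=
  #(B ∩ arc x p q) = arcBound J x p q

theorem IsTight.union (hJ : IsGrassmannNecklace n k J) {B : Finset (Fin n)}
    (hB : B ∈ necklaceBases n k J) {x : Fin n} {p p' q q' : ℕ} (h₁ : IsTight J B x p q)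
    (h₂ : IsTight J B x p' q') (hpp' : p ≤ p') (hp'q : p' ≤ q) (hqq' : q ≤ q') (hq' : q' < n) :
    IsTight J B x p q' := by
  have hsub := arcBound_submodular hJ x hpp' hp'q hqq' hq'
  have hle₁ := card_inter_arc_le_arcBound hJ hB x (hpp'.trans (hp'q.trans hqq')) hq'
  have hle₂ := card_inter_arc_le_arcBound hJ hB x hp'q (hqq'.trans_lt hq')
  have := card_inter_arc_split x B (p := p) (by omega) hqq'
  have := card_inter_arc_split x B (p := p') (by omega) hqq'
  unfold IsTight at *
  omega

/-- The tight arcs `[p, q]` through `y`; `q < n - 1` says that they avoid `x`. -/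
noncomputable def tightArcs (J : Fin n → Finset (Fin n)) (B : Finset (Fin n)) (x y : Fin n) :
    Finset (ℕ × ℕ) := by
  classical
  exact (range n ×ˢ range (n - 1)).filter fun r =>
    r.1 ≤ pos x y ∧ pos x y ≤ r.2 ∧ IsTight J B x r.1 r.2

theorem mem_tightArcs {B : Finset (Fin n)} {x y : Fin n} {r : ℕ × ℕ} :
    r ∈ tightArcs J B x y ↔
      r.1 ≤ pos x y ∧ pos x y ≤ r.2 ∧ r.2 < n - 1 ∧ IsTight J B x r.1 r.2 := by
  simp only [tightArcs, mem_filter, mem_product, mem_range]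
  refine ⟨fun ⟨⟨_, h₂⟩, h⟩ => ⟨h.1, h.2.1, h₂, h.2.2⟩,
    fun ⟨h₁, h₂, h₃, h⟩ => ⟨⟨?_, h₃⟩, h₁, h₂, h⟩⟩
  have := pos_lt x y
  omega

theorem tightArcs_nonempty (hJ : IsGrassmannNecklace n k J) {B : Finset (Fin n)}
    (hB : B ∈ necklaceBases n k J) {x y : Fin n} (hx : x ∈ B) (hy : y ∉ B)
    (hxy : insert y (B.erase x) ∉ necklaceBases n k J) : (tightArcs J B x y).Nonempty := by
  have hBJ := ((mem_necklaceBases_iff hJ.1).1 hB).2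
  have hcard : #(insert y (B.erase x)) = k := by
    rw [card_insert_of_notMem fun h => hy (mem_of_mem_erase h), card_erase_of_mem hx,
      Nat.sub_add_cancel (card_pos.2 ⟨x, hx⟩), card_of_mem_necklaceBases hB]
  simp only [mem_necklaceBases_iff hJ.1, hcard, true_and, not_forall, not_le] at hxy
  obtain ⟨i, j, hij⟩ := hxy
  have hyx : y ∈ cycInterval i j ∧ x ∉ cycInterval i j := by
    by_contra h
    exact ((card_insert_erase_inter_le hx (by tauto)).trans (hBJ i j)).not_gt hij
  obtain ⟨-, hlt, heq⟩ := cycInterval_eq_arc hyx.2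
  have hyarc := mem_arc.1 (heq ▸ hyx.1)
  have := card_insert_erase_inter_le_succ B (cycInterval i j) x y
  have := hBJ i j
  refine ⟨(pos x i, pos x j), mem_tightArcs.2 ⟨hyarc.1, hyarc.2, hlt, ?_⟩⟩
  rw [IsTight, arcBound, atPos_pos, ← heq]
  omega

/-- Overlapping maximal tight arcs coincide: their union is again a tight arc. -/
theorem eq_of_maximal_tightArcs (hJ : IsGrassmannNecklace n k J) {B : Finset (Fin n)}
    (hB : B ∈ necklaceBases n k J) {x y y' : Fin n} {r r' : ℕ × ℕ}
    (hr : r ∈ tightArcs J B x y) (hmax : ∀ s ∈ tightArcs J B x y, s.2 - s.1 ≤ r.2 - r.1)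
    (hr' : r' ∈ tightArcs J B x y')
    (hmax' : ∀ s ∈ tightArcs J B x y', s.2 - s.1 ≤ r'.2 - r'.1)
    (hle : r.1 ≤ r'.1) (hov : r'.1 ≤ r.2) : r = r' := by
  obtain ⟨hy₁, hy₂, hlt, ht⟩ := mem_tightArcs.1 hr
  obtain ⟨hy₁', hy₂', hlt', ht'⟩ := mem_tightArcs.1 hr'
  have hu : IsTight J B x r.1 (max r.2 r'.2) := by
    rcases le_total r.2 r'.2 with h | h
    · rw [max_eq_right h]
      exact ht.union hJ hB ht' hle hov h (by omega)
    · rwa [max_eq_left h]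
  have h₁ := hmax (r.1, max r.2 r'.2) (mem_tightArcs.2 ⟨hy₁, by omega, by omega, hu⟩)
  have h₂ := hmax' (r.1, max r.2 r'.2) (mem_tightArcs.2 ⟨by omega, by omega, by omega, hu⟩)
  ext <;> dsimp only at h₁ h₂ <;> omega

theorem hasBasisExchange_necklaceBases (hJ : IsGrassmannNecklace n k J) :
    HasBasisExchange (necklaceBases n k J) := by
  intro B hB B' hB' x hx
  obtain ⟨hxB, hxB'⟩ := mem_sdiff.1 hx
  by_contra! hcon
  have hmax (y) (hy : y ∈ B' \ B) :
      ∃ r ∈ tightArcs J B x y, ∀ s ∈ tightArcs J B x y, s.2 - s.1 ≤ r.2 - r.1 :=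
    exists_max_image _ _ (tightArcs_nonempty hJ hB hxB (mem_sdiff.1 hy).2 (hcon y hy))
  choose! r hr hrmax using hmax
  have hdisj :
      (↑((B' \ B).image r) : Set (ℕ × ℕ)).PairwiseDisjoint fun s => arc x s.1 s.2 := by
    rw [coe_image]
    rintro _ ⟨y, hy, rfl⟩ _ ⟨y', hy', rfl⟩ hne
    refine disjoint_left.2 fun a ha ha' => hne ?_
    rw [mem_arc] at ha ha'
    rcases le_total (r y).1 (r y').1 with h | h
    · exact eq_of_maximal_tightArcs hJ hB (hr y hy) (hrmax y hy) (hr y' hy') (hrmax y' hy') h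
        (by omega)
    · exact (eq_of_maximal_tightArcs hJ hB (hr y' hy') (hrmax y' hy') (hr y hy) (hrmax y hy) h
        (by omega)).symm
  have hle := card_inter_biUnion_le (B := B) (B' := B') hdisj fun s hs => by
    obtain ⟨y, hy, rfl⟩ := mem_image.1 hs
    obtain ⟨h₁, h₂, hlt, ht⟩ := mem_tightArcs.1 (hr y hy)
    exact ht ▸ card_inter_arc_le_arcBound hJ hB' x (h₁.trans h₂) (by omega)
  refine hle.not_gt (card_inter_lt_card_inter_of_sdiff_subset ?_ hx ?_ fun y hy => ?_)
  · rw [card_of_mem_necklaceBases hB, card_of_mem_necklaceBases hB']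
  · simp only [mem_biUnion, mem_image, mem_arc, not_exists, not_and, pos_self]
    rintro _ ⟨y, hy, rfl⟩ - h
    have := (mem_tightArcs.1 (hr y hy)).2.2.1
    omega
  · obtain ⟨h₁, h₂, -⟩ := mem_tightArcs.1 (hr y hy)
    exact mem_biUnion.2 ⟨r y, mem_image_of_mem _ hy, mem_arc.2 ⟨h₁, h₂⟩⟩

end Arcs

theorem connected_positroid_polytope_is_full_dimensional_general
    (n k : ℕ) [NeZero n]
    (J : Fin n → Finset (Fin n)) (hJ : IsGrassmannNecklace n k J)
    (hconn : ConnectedBases (necklaceBases n k J)) :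
    Module.finrank ℝ (affineSpan ℝ (PJ n k J)).direction = n - 1 := by
  have hexch := hconn.eqvGen_exchangeable (hasBasisExchange_necklaceBases hJ)
  rw [PJ, affineSpan_convexHull, direction_affineSpan,
    vectorSpan_indic_eq_ker (fun _ => card_of_mem_necklaceBases) hexch, finrank_ker_coordSum]

theorem connected_positroid_polytope_is_full_dimensional
    (n k : ℕ) [NeZero n] (hn : 2 ≤ n) (hk1 : 1 ≤ k) (hkn : k ≤ n - 1)
    (J : Fin n → Finset (Fin n)) (hJ : IsGrassmannNecklace n k J)
    (hconn : ConnectedBases (necklaceBases n k J)) :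
    Module.finrank ℝ (affineSpan ℝ (PJ n k J)).direction = n - 1 :=
  connected_positroid_polytope_is_full_dimensional_general n k J hJ hconn

end PositroidPaper
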